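/- arXiv:0711.0592 — 5 statements merged into one kernel-verified Lean document; each statement's English description precedes it below -/
import Mathlib

section
/- Let y : ℝ → ℝ be differentiable with |y′(t)| ≤ L_y for all t ≥ 0, let T_s > 0 and M > 0 satisfy L_y·T_s ≤ M, and assume |y(0)| ≤ 2M. Define the sequence of central numbers c : ℕ → ℝ by c(0) = 0 and c(k+1) = c(k) + M·sgn(y(k·T_s) − c(k)), where sgn(v) = 1 if v ≥ 0 and sgn(v) = −1 if v < 0. Then for every k ∈ ℕ the coder does not saturate: |y(k·T_s) − c(k)| ≤ 2M. -/
/-! The sign decision moves the central number by `M` towards the current sample, so a deviation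
in `[-2M, 2M]` shrinks to one in `[-M, M]`; between two sampling instants the signal itself moves
by at most `L_y T_s ≤ M`, which restores at most `2M`. -/

theorem abs_sub_mul_sign_le {d M : ℝ} (hd : |d| ≤ 2 * M) :
    |d - M * (if 0 ≤ d then (1 : ℝ) else -1)| ≤ M := by
  rw [abs_le] at hd ⊢
  split_ifs <;> constructor <;> linarith

theorem abs_sub_coder_le_of_abs_sub_succ_le {u c : ℕ → ℝ} {M : ℝ}
    (hu : ∀ k, |u (k + 1) - u k| ≤ M) (h0 : |u 0 - c 0| ≤ 2 * M)
    (hc : ∀ k, c (k + 1) = c k + M * (if 0 ≤ u k - c k then (1 : ℝ) else -1)) :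
    ∀ k, |u k - c k| ≤ 2 * M := by
  intro k
  induction k with
  | zero => exact h0
  | succ k ih =>
    calc |u (k + 1) - c (k + 1)|
        = |(u (k + 1) - u k) + (u k - c k - M * (if 0 ≤ u k - c k then (1 : ℝ) else -1))| := by
          rw [hc k]; ring_nf
      _ ≤ |u (k + 1) - u k| + |u k - c k - M * (if 0 ≤ u k - c k then (1 : ℝ) else -1)| :=
          abs_add_le _ _
      _ ≤ M + M := add_le_add (hu k) (abs_sub_mul_sign_le ih)
      _ = 2 * M := by ring

theorem abs_sub_le_of_abs_deriv_le_of_nonneg {y : ℝ → ℝ} {L a b : ℝ} (hy : Differentiable ℝ y)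
    (hderiv : ∀ t ≥ (0 : ℝ), |deriv y t| ≤ L) (ha : 0 ≤ a) (hb : 0 ≤ b) :
    |y b - y a| ≤ L * |b - a| := by
  simpa only [Real.norm_eq_abs] using
    (convex_Ici (0 : ℝ)).norm_image_sub_le_of_norm_deriv_le (fun t _ => hy t)
      (fun t ht => by simpa only [Real.norm_eq_abs] using hderiv t ht) ha hb

theorem first_order_coder_no_saturation_general (y : ℝ → ℝ) (Ly Ts M : ℝ) (c : ℕ → ℝ)
    (hTs : 0 < Ts) (hLT : Ly * Ts ≤ M)
    (hy : Differentiable ℝ y)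
    (hderiv : ∀ t ≥ (0 : ℝ), |deriv y t| ≤ Ly)
    (hy0 : |y 0| ≤ 2 * M)
    (hc0 : c 0 = 0)
    (hc : ∀ k : ℕ,
      c (k + 1) = c k + M * (if 0 ≤ y (k * Ts) - c k then (1 : ℝ) else -1)) :
    ∀ k : ℕ, |y (k * Ts) - c k| ≤ 2 * M := by
  have hsample : ∀ k : ℕ, |y ((k + 1 : ℕ) * Ts) - y (k * Ts)| ≤ M := fun k =>
    calc |y ((k + 1 : ℕ) * Ts) - y (k * Ts)|
        ≤ Ly * |((k + 1 : ℕ) : ℝ) * Ts - k * Ts| :=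
          abs_sub_le_of_abs_deriv_le_of_nonneg hy hderiv (by positivity) (by positivity)
      _ = Ly * Ts := by push_cast; rw [add_one_mul, add_sub_cancel_left, abs_of_pos hTs]
      _ ≤ M := hLT
  refine abs_sub_coder_le_of_abs_sub_succ_le (u := fun k : ℕ => y (k * Ts)) hsample ?_ hc
  simpa only [Nat.cast_zero, zero_mul, hc0, sub_zero] using hy0

/-- Non-saturation of the first-order binary coder: if the master output `y` has
rate bounded by `L_y`, the sampling time satisfies `L_y·T_s ≤ M`, and
`|y(0)| ≤ 2M`, then the deviation of `y(k·T_s)` from the central numbers `c(k)`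
never exceeds `2M`. -/
theorem first_order_coder_no_saturation (y : ℝ → ℝ) (Ly Ts M : ℝ) (c : ℕ → ℝ)
    (hTs : 0 < Ts) (hM : 0 < M) (hLT : Ly * Ts ≤ M)
    (hy : Differentiable ℝ y)
    (hderiv : ∀ t ≥ (0 : ℝ), |deriv y t| ≤ Ly)
    (hy0 : |y 0| ≤ 2 * M)
    (hc0 : c 0 = 0)
    (hc : ∀ k : ℕ,
      c (k + 1) = c k + M * (if 0 ≤ y (k * Ts) - c k then (1 : ℝ) else -1)) :
    ∀ k : ℕ, |y (k * Ts) - c k| ≤ 2 * M :=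
  first_order_coder_no_saturation_general y Ly Ts M c hTs hLT hy hderiv hy0 hc0 hc
end

section
/- Let y : ℝ → ℝ be differentiable with |y′(t)| ≤ L_y for all t ≥ 0, let T_s > 0 and M > 0 satisfy L_y·T_s ≤ M, and assume |y(0)| ≤ 2M. Define c : ℕ → ℝ by c(0) = 0 and c(k+1) = c(k) + M·sgn(y(k·T_s) − c(k)), and define the decoded zero-order-hold signal ȳ(t) = c(k) + M·sgn(y(k·T_s) − c(k)) for t ∈ [k·T_s, (k+1)·T_s). Then the transmission error satisfies |y(t) − ȳ(t)| ≤ M + L_y·T_s ≤ 2M for all t ≥ 0. -/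
/-!
Between consecutive samples the signal moves by at most `L_y·T_s ≤ M`, so the sampled error
`e k = y(k·T_s) − c(k)` stays in `[−2M, 2M]`: if `|e k| ≤ 2M`, one step of size `M` towards the
sample leaves `|y(k·T_s) − c(k+1)| ≤ M`, and the next sample adds at most `M` more. On the
sampling interval the decoder holds `c(k+1)`, so the error at time `t` is at most this `M` plus
the drift `L_y·T_s` of `y` since the last sample.
-/

noncomputable def coderUpdate (M e c : ℝ) : ℝ :=
  c + M * (if 0 ≤ e - c then 1 else -1)

theorem abs_sub_coderUpdate_le {M e c : ℝ} (h : |e - c| ≤ 2 * M) :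
    |e - coderUpdate M e c| ≤ M := by
  obtain ⟨hlo, hhi⟩ := abs_le.mp h
  unfold coderUpdate
  split_ifs <;> rw [abs_le] <;> constructor <;> linarith

theorem abs_sub_coder_le_two_mul {M : ℝ} {s c : ℕ → ℝ}
    (hs : ∀ k, |s (k + 1) - s k| ≤ M) (h0 : |s 0 - c 0| ≤ 2 * M)
    (hc : ∀ k, c (k + 1) = coderUpdate M (s k) (c k)) (k : ℕ) :
    |s k - c k| ≤ 2 * M := by
  induction k with
  | zero => exact h0
  | succ k ih =>
    calc |s (k + 1) - c (k + 1)| ≤ |s (k + 1) - s k| + |s k - c (k + 1)| := abs_sub_le _ _ _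
      _ ≤ M + M := by
        rw [hc k]
        exact add_le_add (hs k) (abs_sub_coderUpdate_le ih)
      _ = 2 * M := by ring

theorem abs_sub_le_of_abs_deriv_le {f : ℝ → ℝ} {C h a b : ℝ}
    (hf : ∀ x ≥ a, DifferentiableAt ℝ f x) (hf' : ∀ x ≥ a, |deriv f x| ≤ C)
    (hab : a ≤ b) (hba : b ≤ a + h) : |f b - f a| ≤ C * h := by
  have hC : 0 ≤ C := (abs_nonneg _).trans (hf' a le_rfl)
  calc |f b - f a| ≤ C * |b - a| :=
        Convex.norm_image_sub_le_of_norm_deriv_le (s := Set.Ici a) hf hf' (convex_Ici a)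
          Set.self_mem_Ici hab
    _ ≤ C * h := by
        rw [abs_of_nonneg (sub_nonneg.mpr hab)]
        exact mul_le_mul_of_nonneg_left (by linarith) hC

theorem mem_Ico_natFloor_div_mul {t T : ℝ} (ht : 0 ≤ t) (hT : 0 < T) :
    t ∈ Set.Ico ((⌊t / T⌋₊ : ℝ) * T) ((⌊t / T⌋₊ + 1 : ℝ) * T) :=
  ⟨(le_div_iff₀ hT).mp (Nat.floor_le (div_nonneg ht hT.le)),
    (div_lt_iff₀ hT).mp (Nat.lt_floor_add_one _)⟩

theorem first_order_coder_transmission_error_general (y : ℝ → ℝ) (Ly Ts M : ℝ)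
    (c : ℕ → ℝ) (ybar : ℝ → ℝ)
    (hTs : 0 < Ts) (hLT : Ly * Ts ≤ M)
    (hy : Differentiable ℝ y)
    (hderiv : ∀ t ≥ (0 : ℝ), |deriv y t| ≤ Ly)
    (hy0 : |y 0| ≤ 2 * M)
    (hc0 : c 0 = 0)
    (hc : ∀ k : ℕ,
      c (k + 1) = c k + M * (if 0 ≤ y (k * Ts) - c k then (1 : ℝ) else -1))
    (hybar : ∀ k : ℕ, ∀ t ∈ Set.Ico ((k : ℝ) * Ts) ((k + 1 : ℝ) * Ts),
      ybar t = c k + M * (if 0 ≤ y (k * Ts) - c k then (1 : ℝ) else -1)) :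
    ∀ t ≥ (0 : ℝ), |y t - ybar t| ≤ M + Ly * Ts ∧ M + Ly * Ts ≤ 2 * M := by
  have hdrift : ∀ a b, 0 ≤ a → a ≤ b → b ≤ a + Ts → |y b - y a| ≤ Ly * Ts :=
    fun a b ha hab hba => abs_sub_le_of_abs_deriv_le (fun x _ => hy x)
      (fun x hx => hderiv x (ha.trans hx)) hab hba
  have hsamples (k : ℕ) : |y (k * Ts) - c k| ≤ 2 * M :=
    abs_sub_coder_le_two_mul (s := fun k : ℕ => y (k * Ts))
      (fun k => (hdrift _ _ (by positivity) (by push_cast; linarith)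
        (by push_cast; linarith)).trans hLT)
      (by simpa [hc0] using hy0) hc k
  intro t ht
  refine ⟨?_, by linarith⟩
  set k := ⌊t / Ts⌋₊
  have hmem := mem_Ico_natFloor_div_mul ht hTs
  calc |y t - ybar t| = |y t - coderUpdate M (y (k * Ts)) (c k)| := by rw [hybar k t hmem]; rfl
    _ ≤ |y t - y (k * Ts)| + |y (k * Ts) - coderUpdate M (y (k * Ts)) (c k)| := abs_sub_le _ _ _
    _ ≤ Ly * Ts + M := add_le_add
        (hdrift _ _ (by positivity) hmem.1 (by linarith [hmem.2]))
        (abs_sub_coderUpdate_le (hsamples k))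
    _ = M + Ly * Ts := add_comm _ _

/-- Transmission error bound for the first-order binary coder with zero-order
hold decoding: under the non-saturation conditions `L_y·T_s ≤ M`, `|y(0)| ≤ 2M`,
the decoded signal `ȳ` satisfies `|y(t) − ȳ(t)| ≤ M + L_y·T_s ≤ 2M` for all
`t ≥ 0`. -/
theorem first_order_coder_transmission_error (y : ℝ → ℝ) (Ly Ts M : ℝ)
    (c : ℕ → ℝ) (ybar : ℝ → ℝ)
    (hTs : 0 < Ts) (hM : 0 < M) (hLT : Ly * Ts ≤ M)
    (hy : Differentiable ℝ y)
    (hderiv : ∀ t ≥ (0 : ℝ), |deriv y t| ≤ Ly)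
    (hy0 : |y 0| ≤ 2 * M)
    (hc0 : c 0 = 0)
    (hc : ∀ k : ℕ,
      c (k + 1) = c k + M * (if 0 ≤ y (k * Ts) - c k then (1 : ℝ) else -1))
    (hybar : ∀ k : ℕ, ∀ t ∈ Set.Ico ((k : ℝ) * Ts) ((k + 1 : ℝ) * Ts),
      ybar t = c k + M * (if 0 ≤ y (k * Ts) - c k then (1 : ℝ) else -1)) :
    ∀ t ≥ (0 : ℝ), |y t - ybar t| ≤ M + Ly * Ts ∧ M + Ly * Ts ≤ 2 * M :=
  first_order_coder_transmission_error_general y Ly Ts M c ybar hTs hLT hy hderiv hy0 hc0 hc hybar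
end

section
/- Let A be a real n×n matrix, B a real n×1 matrix, C a real 1×n matrix, K ∈ ℝ, and set A_K := A − B K C. Let P be a real symmetric positive-definite n×n matrix and μ > 0 such that P A_K + A_Kᵀ P ≤ −μ P (in the sense of quadratic forms) and P B = Cᵀ. Let κ ∈ ℝ, Δ ≥ 0, and let e : ℝ → ℝⁿ be differentiable and satisfy ė(t) = A_K e(t) + B ξ(t) − B κ δ(t), where ξ, δ : ℝ → ℝ satisfy ξ(t)·(C e(t)) ≤ 0 and |δ(t)| ≤ Δ for all t. Then the Lyapunov function V(t) := e(t)ᵀ P e(t) satisfies the differential inequality V̇(t) ≤ −μ V(t) + 2|κ|Δ·√(Bᵀ P B)·√(V(t)) for all t. -/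
/-!
Differentiating `V = eᵀPe` along the trajectory and using `PB = Cᵀ` gives
`V̇ = eᵀ(PA_K + A_KᵀP)e + 2ξ·Ce − 2κδ·Ce`. The first term is at most `−μV`, the second is
nonpositive by the sector condition, and the third is controlled through `Ce = BᵀPe` and the
Cauchy–Schwarz inequality for the form `P`, `|BᵀPe| ≤ √(BᵀPB)·√V`.
-/

open Matrix

section

variable {ι : Type*} [Fintype ι]

theorem HasDerivAt.dotProduct {𝕜 : Type*} [NontriviallyNormedField 𝕜] {u v : 𝕜 → ι → 𝕜}
    {u' v' : ι → 𝕜} {t : 𝕜} (hu : HasDerivAt u u' t) (hv : HasDerivAt v v' t) :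
    HasDerivAt (fun s => u s ⬝ᵥ v s) (u' ⬝ᵥ v t + u t ⬝ᵥ v') t := by
  unfold _root_.dotProduct
  rw [← Finset.sum_add_distrib]
  exact HasDerivAt.fun_sum fun i _ => (hasDerivAt_pi.mp hu i).mul (hasDerivAt_pi.mp hv i)

theorem HasDerivAt.mulVec {𝕜 ι' : Type*} [NontriviallyNormedField 𝕜] [Fintype ι']
    (M : Matrix ι' ι 𝕜) {u : 𝕜 → ι → 𝕜} {u' : ι → 𝕜} {t : 𝕜} (hu : HasDerivAt u u' t) :
    HasDerivAt (fun s => M *ᵥ u s) (M *ᵥ u') t :=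
  hasDerivAt_pi.mpr fun i => by
    have h := (hasDerivAt_const t (M i)).dotProduct hu
    rwa [zero_dotProduct, zero_add] at h

theorem Matrix.IsSymm.dotProduct_mulVec_comm {R : Type*} [CommSemiring R] {P : Matrix ι ι R}
    (hP : P.IsSymm) (x y : ι → R) : x ⬝ᵥ P *ᵥ y = y ⬝ᵥ P *ᵥ x := by
  rw [dotProduct_mulVec, ← mulVec_transpose, hP.eq, dotProduct_comm]

theorem Matrix.dotProduct_mul_add_transpose_mul_mulVec {R : Type*} [CommSemiring R]
    (P M : Matrix ι ι R) (v : ι → R) :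
    v ⬝ᵥ (P * M + Mᵀ * P) *ᵥ v = M *ᵥ v ⬝ᵥ P *ᵥ v + v ⬝ᵥ P *ᵥ (M *ᵥ v) := by
  rw [add_mulVec, dotProduct_add, ← mulVec_mulVec, ← mulVec_mulVec, dotProduct_mulVec v Mᵀ,
    vecMul_transpose, add_comm]

theorem Matrix.PosSemidef.abs_dotProduct_mulVec_le {P : Matrix ι ι ℝ} (hP : P.PosSemidef)
    (x y : ι → ℝ) :
    |x ⬝ᵥ P *ᵥ y| ≤ √(x ⬝ᵥ P *ᵥ x) * √(y ⬝ᵥ P *ᵥ y) := by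
  classical
  have hsymm : P.IsSymm := isHermitian_iff_isSymm.mp hP.isHermitian
  have hcs := LinearMap.BilinForm.apply_mul_apply_le_of_forall_zero_le (Matrix.toLinearMap₂' ℝ P)
    (fun v => by simpa [toLinearMap₂'_apply'] using hP.dotProduct_mulVec_nonneg v) x y
  simp only [toLinearMap₂'_apply', hsymm.dotProduct_mulVec_comm y x] at hcs
  have hx : 0 ≤ x ⬝ᵥ P *ᵥ x := by simpa using hP.dotProduct_mulVec_nonneg x
  rw [← Real.sqrt_mul hx]
  exact Real.abs_le_sqrt (by rwa [sq])

theorem Matrix.IsSymm.dotProduct_mulVec_add_dotProduct_mulVec_affine {R : Type*} [CommRing R]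
    {P : Matrix ι ι R} {B C : ι → R} (hP : P.IsSymm) (hPB : P *ᵥ B = C) (M : Matrix ι ι R)
    (v : ι → R) (c : R) :
    (M *ᵥ v + c • B) ⬝ᵥ P *ᵥ v + v ⬝ᵥ P *ᵥ (M *ᵥ v + c • B)
      = v ⬝ᵥ (P * M + Mᵀ * P) *ᵥ v + 2 * c * (C ⬝ᵥ v) := by
  rw [dotProduct_mul_add_transpose_mul_mulVec, hP.dotProduct_mulVec_comm (M *ᵥ v + c • B)]
  simp only [mulVec_add, mulVec_smul, dotProduct_add, dotProduct_smul, hPB, smul_eq_mul,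
    dotProduct_comm v C]
  rw [hP.dotProduct_mulVec_comm (M *ᵥ v) v]
  ring

end

theorem lyapunov_differential_inequality_general {n : ℕ}
    (A : Matrix (Fin n) (Fin n) ℝ) (B C : Fin n → ℝ) (K : ℝ)
    (P : Matrix (Fin n) (Fin n) ℝ) (μ κ Δ : ℝ)
    (hP : P.PosDef)
    (hLyap : ∀ v : Fin n → ℝ,
      v ⬝ᵥ (P * (A - K • vecMulVec B C) + (A - K • vecMulVec B C)ᵀ * P).mulVec v
        ≤ -μ * (v ⬝ᵥ P.mulVec v))
    (hPB : P.mulVec B = C)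
    (e : ℝ → Fin n → ℝ) (ξ δ : ℝ → ℝ)
    (hde : ∀ t : ℝ, HasDerivAt e
      ((A - K • vecMulVec B C).mulVec (e t) + ξ t • B - (κ * δ t) • B) t)
    (hsec : ∀ t : ℝ, ξ t * (C ⬝ᵥ e t) ≤ 0)
    (hδ : ∀ t : ℝ, |δ t| ≤ Δ) :
    ∀ t : ℝ, deriv (fun s => e s ⬝ᵥ P.mulVec (e s)) t
      ≤ -μ * (e t ⬝ᵥ P.mulVec (e t))
        + 2 * |κ| * Δ * Real.sqrt (B ⬝ᵥ P.mulVec B)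
          * Real.sqrt (e t ⬝ᵥ P.mulVec (e t)) := by
  intro t
  set AK := A - K • vecMulVec B C
  have hsymm : P.IsSymm := isHermitian_iff_isSymm.mp hP.isHermitian
  have hV : HasDerivAt (fun s => e s ⬝ᵥ P *ᵥ e s)
      (e t ⬝ᵥ (P * AK + AKᵀ * P) *ᵥ e t + 2 * (ξ t - κ * δ t) * (C ⬝ᵥ e t)) t := by
    have hde' : HasDerivAt e (AK *ᵥ e t + (ξ t - κ * δ t) • B) t := by
      rw [sub_smul, ← add_sub_assoc]
      exact hde t
    rw [← hsymm.dotProduct_mulVec_add_dotProduct_mulVec_affine hPB]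
    exact hde'.dotProduct (hde'.mulVec P)
  have hCe : C ⬝ᵥ e t = B ⬝ᵥ P *ᵥ e t := by
    rw [hsymm.dotProduct_mulVec_comm, hPB, dotProduct_comm]
  have hdisturbance : -(κ * δ t * (C ⬝ᵥ e t))
      ≤ |κ| * Δ * (√(B ⬝ᵥ P *ᵥ B) * √(e t ⬝ᵥ P *ᵥ e t)) :=
    calc -(κ * δ t * (C ⬝ᵥ e t))
        ≤ |κ * δ t| * |C ⬝ᵥ e t| := by rw [← abs_mul]; exact neg_le_abs _
      _ ≤ |κ * δ t| * (√(B ⬝ᵥ P *ᵥ B) * √(e t ⬝ᵥ P *ᵥ e t)) := by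
        rw [hCe]
        exact mul_le_mul_of_nonneg_left (hP.posSemidef.abs_dotProduct_mulVec_le _ _) (abs_nonneg _)
      _ ≤ |κ| * Δ * (√(B ⬝ᵥ P *ᵥ B) * √(e t ⬝ᵥ P *ᵥ e t)) := by
        rw [abs_mul]
        gcongr
        exact hδ t
  rw [hV.deriv]
  linarith [hLyap (e t), hsec t]

/-- Lyapunov differential inequality for the perturbed passive error system:
under the passification relations `P A_K + A_Kᵀ P ≤ −μP` (as quadratic forms)
and `PB = Cᵀ`, along trajectories of `ė = A_K e + Bξ − Bκδ` with sector
condition `ξ·(Ce) ≤ 0` and `|δ| ≤ Δ`, the function `V = eᵀPe` satisfies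
`V̇ ≤ −μV + 2|κ|Δ·√(BᵀPB)·√V`. -/
theorem lyapunov_differential_inequality {n : ℕ}
    (A : Matrix (Fin n) (Fin n) ℝ) (B C : Fin n → ℝ) (K : ℝ)
    (P : Matrix (Fin n) (Fin n) ℝ) (μ κ Δ : ℝ)
    (hP : P.PosDef) (hμ : 0 < μ) (hΔ : 0 ≤ Δ)
    (hLyap : ∀ v : Fin n → ℝ,
      v ⬝ᵥ (P * (A - K • vecMulVec B C) + (A - K • vecMulVec B C)ᵀ * P).mulVec v
        ≤ -μ * (v ⬝ᵥ P.mulVec v))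
    (hPB : P.mulVec B = C)
    (e : ℝ → Fin n → ℝ) (ξ δ : ℝ → ℝ)
    (hde : ∀ t : ℝ, HasDerivAt e
      ((A - K • vecMulVec B C).mulVec (e t) + ξ t • B - (κ * δ t) • B) t)
    (hsec : ∀ t : ℝ, ξ t * (C ⬝ᵥ e t) ≤ 0)
    (hδ : ∀ t : ℝ, |δ t| ≤ Δ) :
    ∀ t : ℝ, deriv (fun s => e s ⬝ᵥ P.mulVec (e s)) t
      ≤ -μ * (e t ⬝ᵥ P.mulVec (e t))
        + 2 * |κ| * Δ * Real.sqrt (B ⬝ᵥ P.mulVec B)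
          * Real.sqrt (e t ⬝ᵥ P.mulVec (e t)) :=
  lyapunov_differential_inequality_general A B C K P μ κ Δ hP hLyap hPB e ξ δ hde hsec hδ
end

section
/- Let V : [0, ∞) → [0, ∞) be differentiable, and let μ > 0, ν ≥ 0 be such that V̇(t) ≤ −μ V(t) + ν·√(V(t)) for all t ≥ 0. Then limsup_{t→∞} V(t) ≤ (ν/μ)². -/
/-!
Fix `b > (ν/μ)²` and put `r = √b`, so that `ν < μ r`. Writing `V = s²`, the right-hand side
`-μ s² + ν s` is at most `-r (μ r - ν) < 0` whenever `s ≥ r`, i.e. whenever `V ≥ b`. Hence `V`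
decreases at a uniform rate while it stays above `b`, so being nonnegative it must reach the
sublevel set `{V ≤ b}`; and it can never leave that set, since `V̇ < 0` on its boundary.
So `V ≤ b` eventually, for every such `b`.
-/

open Filter Set

theorem neg_mul_sq_add_mul_le {μ ν r s : ℝ} (hμ : 0 ≤ μ) (hr : 0 ≤ r) (hrs : r ≤ s)
    (hν : ν < μ * r) : -μ * s ^ 2 + ν * s ≤ -(r * (μ * r - ν)) := by
  have hs : 0 ≤ μ * s := mul_nonneg hμ (hr.trans hrs)
  nlinarith [mul_nonneg (sub_nonneg.2 hrs) (by linarith : 0 ≤ μ * (s + r) - ν)]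

section ScalarComparison

variable {f : ℝ → ℝ} {a b : ℝ}

theorem exists_le_of_deriv_le_neg_of_le {k m : ℝ} (hk : 0 < k) (hm : ∀ t ≥ a, m ≤ f t)
    (hf : ∀ t ≥ a, DifferentiableAt ℝ f t) (hf' : ∀ t ≥ a, b ≤ f t → deriv f t ≤ -k) :
    ∃ t ≥ a, f t ≤ b := by
  by_contra! hgt
  have hdecay : ∀ t ≥ a, f t - f a ≤ -k * (t - a) :=
    fun t ht ↦ (convex_Ici a).image_sub_le_mul_sub_of_deriv_le
      (fun x hx ↦ (hf x hx).continuousAt.continuousWithinAt)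
      (fun x hx ↦ (hf x (interior_subset hx)).differentiableWithinAt)
      (fun x hx ↦ hf' x (interior_subset hx) (hgt x (interior_subset hx)).le)
      a self_mem_Ici t ht ht
  set T := a + (f a - m + 1) / k
  have hfa : m ≤ f a := hm a le_rfl
  have hT : a ≤ T := le_add_of_nonneg_right (div_nonneg (by linarith) hk.le)
  have hkT : k * (T - a) = f a - m + 1 := by simp only [T]; field_simp; ring
  linarith [hdecay T hT, hm T hT]

theorem le_of_deriv_neg_of_eq (hf : ∀ t ≥ a, DifferentiableAt ℝ f t) (ha : f a ≤ b)
    (hf' : ∀ t ≥ a, f t = b → deriv f t < 0) : ∀ t ≥ a, f t ≤ b := fun _ ht ↦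
  image_le_of_deriv_right_lt_deriv_boundary (B := fun _ ↦ b) (B' := fun _ ↦ 0)
    (fun x hx ↦ (hf x hx.1).continuousAt.continuousWithinAt)
    (fun x hx ↦ (hf x hx.1).hasDerivAt.hasDerivWithinAt) ha (fun x ↦ hasDerivAt_const x b)
    (fun x hx hfx ↦ hf' x hx.1 hfx) ⟨ht, le_rfl⟩

theorem eventually_le_of_deriv_le_neg_of_le {k m : ℝ} (hk : 0 < k) (hm : ∀ t ≥ a, m ≤ f t)
    (hf : ∀ t ≥ a, DifferentiableAt ℝ f t) (hf' : ∀ t ≥ a, b ≤ f t → deriv f t ≤ -k) :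
    ∀ᶠ t in atTop, f t ≤ b := by
  obtain ⟨t₀, ht₀, hft₀⟩ := exists_le_of_deriv_le_neg_of_le hk hm hf hf'
  have hinv : ∀ t ≥ t₀, f t ≤ b :=
    le_of_deriv_neg_of_eq (fun t ht ↦ hf t (ht₀.trans ht)) hft₀
      fun t ht hft ↦ (hf' t (ht₀.trans ht) hft.ge).trans_lt (neg_neg_of_pos hk)
  exact eventually_atTop.2 ⟨t₀, hinv⟩

end ScalarComparison

theorem limsup_le_of_riccati_comparison_general (V : ℝ → ℝ) (μ ν : ℝ)
    (hμ : 0 < μ)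
    (hVnonneg : ∀ t ≥ (0 : ℝ), 0 ≤ V t)
    (hVdiff : ∀ t ≥ (0 : ℝ), DifferentiableAt ℝ V t)
    (hVineq : ∀ t ≥ (0 : ℝ), deriv V t ≤ -μ * V t + ν * Real.sqrt (V t)) :
    limsup V atTop ≤ (ν / μ) ^ 2 := by
  have hcobdd : IsCoboundedUnder (· ≤ ·) atTop V :=
    isBoundedUnder_of_eventually_ge (eventually_atTop.2 ⟨0, hVnonneg⟩) |>.isCoboundedUnder_le
  refine le_of_forall_gt_imp_ge_of_dense fun b hb ↦ limsup_le_of_le hcobdd ?_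
  set r := Real.sqrt b
  have hνμr : ν / μ < r := by
    calc ν / μ ≤ |ν / μ| := le_abs_self _
      _ = Real.sqrt ((ν / μ) ^ 2) := (Real.sqrt_sq_eq_abs _).symm
      _ < r := Real.sqrt_lt_sqrt (sq_nonneg _) hb
  have hr : 0 < r := Real.sqrt_pos.2 ((sq_nonneg _).trans_lt hb)
  have hν : ν < μ * r := by rwa [div_lt_iff₀' hμ] at hνμr
  refine eventually_le_of_deriv_le_neg_of_le (mul_pos hr (sub_pos.2 hν)) hVnonneg hVdiff
    fun t ht hbV ↦ ?_
  calc deriv V t ≤ -μ * Real.sqrt (V t) ^ 2 + ν * Real.sqrt (V t) := by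
        rw [Real.sq_sqrt (hVnonneg t ht)]; exact hVineq t ht
    _ ≤ -(r * (μ * r - ν)) :=
        neg_mul_sq_add_mul_le hμ.le hr.le (Real.sqrt_le_sqrt hbV) hν

/-- Comparison principle: if `V ≥ 0` is differentiable on `[0, ∞)` and
`V̇ ≤ −μV + ν√V` there with `μ > 0`, `ν ≥ 0`, then
`limsup_{t→∞} V(t) ≤ (ν/μ)²`. -/
theorem limsup_le_of_riccati_comparison (V : ℝ → ℝ) (μ ν : ℝ)
    (hμ : 0 < μ) (hν : 0 ≤ ν)
    (hVnonneg : ∀ t ≥ (0 : ℝ), 0 ≤ V t)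
    (hVdiff : ∀ t ≥ (0 : ℝ), DifferentiableAt ℝ V t)
    (hVineq : ∀ t ≥ (0 : ℝ), deriv V t ≤ -μ * V t + ν * Real.sqrt (V t)) :
    limsup V atTop ≤ (ν / μ) ^ 2 :=
  limsup_le_of_riccati_comparison_general V μ ν hμ hVnonneg hVdiff hVineq
end

section
/- Let A be a real n×n matrix, B a real n×1 matrix, C a nonzero real 1×n matrix, K ∈ ℝ, and set A_K := A − B K C. Suppose P is a real symmetric positive-definite n×n matrix such that 2 eᵀ P (A_K e + B ξ) < 0 for every e ∈ ℝⁿ with e ≠ 0 and every ξ ∈ ℝ with ξ·(C e) ≤ 0. Then P A_K + A_Kᵀ P is negative definite, and there exists a scalar τ ≥ 0 such that P B = τ·Cᵀ. -/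
/-!
Along `ξ = 0` the hypothesis says `2 eᵀ P A_K e < 0`, which is the quadratic form of
`P A_K + A_Kᵀ P` since `P` is symmetric. For fixed `e`, the derivative is affine in `ξ`, with slope
`eᵀ P B`, and stays negative on the whole half-line `ξ · (Ce) ≤ 0`; so the slope is zero when
`Ce = 0` and otherwise has the sign of `Ce`. A functional that vanishes on `ker C` and has the same
sign as `C` everywhere else is a nonnegative multiple of `C`.
-/

open Matrix

section Sector

variable {K : Type*} [Field K] [LinearOrder K] [IsStrictOrderedRing K]

theorem eq_zero_or_mul_pos_of_forall_mul_nonpos {a b c : K}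
    (h : ∀ ξ : K, ξ * c ≤ 0 → a + ξ * b < 0) : b = 0 ∨ 0 < b * c := by
  by_contra! ⟨hb, hbc⟩
  -- `ξ = t b` with `t ≥ 0` keeps `ξ c = t (b c) ≤ 0` while `ξ b = |a| + 1`.
  set t := (|a| + 1) / (b * b)
  have ht : 0 ≤ t := div_nonneg (by positivity) (mul_self_nonneg b)
  have hslope : t * b * b = |a| + 1 := by
    rw [mul_assoc]; exact div_mul_cancel₀ _ (mul_ne_zero hb hb)
  have := h (t * b) (by rw [mul_assoc]; exact mul_nonpos_of_nonneg_of_nonpos ht hbc)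
  linarith [neg_abs_le a]

variable {ι : Type*} [Fintype ι]

theorem exists_smul_eq_of_dotProduct_eq_zero {v C : ι → K}
    (h : ∀ e, C ⬝ᵥ e = 0 → v ⬝ᵥ e = 0) : ∃ s : K, v = s • C := by
  by_cases hC : C = 0
  · exact ⟨0, by simpa [hC] using dotProduct_self_eq_zero.mp (h v (by simp [hC]))⟩
  have hCC : C ⬝ᵥ C ≠ 0 := mt dotProduct_self_eq_zero.mp hC
  set s := (v ⬝ᵥ C) / (C ⬝ᵥ C)
  have hCw : C ⬝ᵥ (v - s • C) = 0 := by
    rw [dotProduct_sub, dotProduct_smul, smul_eq_mul, dotProduct_comm C v, div_mul_cancel₀ _ hCC,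
      sub_self]
  refine ⟨s, sub_eq_zero.mp (dotProduct_self_eq_zero.mp ?_)⟩
  calc (v - s • C) ⬝ᵥ (v - s • C) = v ⬝ᵥ (v - s • C) - s * (C ⬝ᵥ (v - s • C)) := by
        rw [sub_dotProduct, smul_dotProduct, smul_eq_mul]
    _ = 0 := by rw [hCw, h _ hCw, mul_zero, sub_zero]

theorem exists_nonneg_smul_eq_of_sign_coherent {v C : ι → K}
    (h : ∀ e, v ⬝ᵥ e = 0 ∨ 0 < v ⬝ᵥ e * C ⬝ᵥ e) : ∃ τ : K, 0 ≤ τ ∧ v = τ • C := by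
  obtain ⟨s, rfl⟩ := exists_smul_eq_of_dotProduct_eq_zero (v := v) (C := C) fun e hCe => by
    simpa [hCe] using h e
  by_cases hC : C = 0
  · exact ⟨0, le_rfl, by simp [hC]⟩
  have hCC : 0 < C ⬝ᵥ C := (Fintype.sum_nonneg fun i => mul_self_nonneg (C i)).lt_of_ne'
    (mt dotProduct_self_eq_zero.mp hC)
  refine ⟨s, ?_, rfl⟩
  have hsign := h C
  rw [smul_dotProduct, smul_eq_mul] at hsign
  rcases hsign with hzero | hpos
  · exact ((mul_eq_zero.mp hzero).resolve_right hCC.ne').ge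
  · exact (pos_of_mul_pos_left (mul_assoc s _ _ ▸ hpos) (mul_pos hCC hCC).le).le

end Sector

theorem dotProduct_mulVec_mul_add_transpose_mul {R ι : Type*} [CommRing R] [Fintype ι]
    {P : Matrix ι ι R} (hP : P.IsSymm) (M : Matrix ι ι R) (e : ι → R) :
    e ⬝ᵥ (P * M + Mᵀ * P) *ᵥ e = 2 * (e ⬝ᵥ P *ᵥ (M *ᵥ e)) := by
  rw [add_mulVec, dotProduct_add, ← mulVec_mulVec, ← mulVec_mulVec, dotProduct_mulVec e Mᵀ,
    vecMul_transpose, dotProduct_mulVec e P, ← hP.eq, vecMul_transpose, hP.eq, dotProduct_comm]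
  ring

theorem quadratic_lyapunov_sector_necessity_general {n : ℕ}
    (A : Matrix (Fin n) (Fin n) ℝ) (B C : Fin n → ℝ) (K : ℝ)
    (P : Matrix (Fin n) (Fin n) ℝ) (hP : P.PosDef)
    (hV : ∀ e : Fin n → ℝ, e ≠ 0 → ∀ ξ : ℝ, ξ * (C ⬝ᵥ e) ≤ 0 →
      2 * (e ⬝ᵥ P.mulVec ((A - K • vecMulVec B C).mulVec e + ξ • B)) < 0) :
    (∀ e : Fin n → ℝ, e ≠ 0 →
      e ⬝ᵥ (P * (A - K • vecMulVec B C) + (A - K • vecMulVec B C)ᵀ * P).mulVec e < 0)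
    ∧ ∃ τ : ℝ, 0 ≤ τ ∧ P.mulVec B = τ • C := by
  set AK := A - K • vecMulVec B C
  have hderiv : ∀ e, e ≠ 0 → ∀ ξ : ℝ, ξ * (C ⬝ᵥ e) ≤ 0 →
      e ⬝ᵥ P *ᵥ (AK *ᵥ e) + ξ * (P *ᵥ B ⬝ᵥ e) < 0 := by
    intro e he ξ hξ
    have := hV e he ξ hξ
    rw [mulVec_add, mulVec_smul, dotProduct_add, dotProduct_smul, smul_eq_mul,
      dotProduct_comm e (P *ᵥ B)] at this
    linarith
  refine ⟨fun e he => ?_, exists_nonneg_smul_eq_of_sign_coherent fun e => ?_⟩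
  · rw [dotProduct_mulVec_mul_add_transpose_mul (isHermitian_iff_isSymm.mp hP.isHermitian)]
    linarith [hderiv e he 0 (by simp)]
  · rcases eq_or_ne e 0 with rfl | he
    · simp
    · exact eq_zero_or_mul_pos_of_forall_mul_nonpos (hderiv e he)

/-- Necessity: if the quadratic form `V(e) = eᵀPe` with `P > 0` has strictly
negative derivative `2eᵀP(A_K e + Bξ) < 0` for every `e ≠ 0` and every
sector-bounded `ξ` with `ξ·(Ce) ≤ 0` (with `C ≠ 0`), then `P A_K + A_Kᵀ P` is
negative definite and `PB = τ·Cᵀ` for some `τ ≥ 0`. -/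
theorem quadratic_lyapunov_sector_necessity {n : ℕ}
    (A : Matrix (Fin n) (Fin n) ℝ) (B C : Fin n → ℝ) (K : ℝ)
    (hC : C ≠ 0)
    (P : Matrix (Fin n) (Fin n) ℝ) (hP : P.PosDef)
    (hV : ∀ e : Fin n → ℝ, e ≠ 0 → ∀ ξ : ℝ, ξ * (C ⬝ᵥ e) ≤ 0 →
      2 * (e ⬝ᵥ P.mulVec ((A - K • vecMulVec B C).mulVec e + ξ • B)) < 0) :
    (∀ e : Fin n → ℝ, e ≠ 0 →
      e ⬝ᵥ (P * (A - K • vecMulVec B C) + (A - K • vecMulVec B C)ᵀ * P).mulVec e < 0)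
    ∧ ∃ τ : ℝ, 0 ≤ τ ∧ P.mulVec B = τ • C :=
  quadratic_lyapunov_sector_necessity_general A B C K P hP hV
end
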